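/- arXiv:2401.05874 — 3 statements merged into one kernel-verified Lean document; each statement's English description precedes it below -/
import Mathlib

section
/- Suppose c : ℕ → ℝ satisfies c(n) = C·n^{−κ}·exp(A·n^λ)·(1 + o(1)) as n → ∞, with constants C > 0, A > 0, κ ∈ ℝ, and 0 < λ < 1. Then for all sufficiently large a and b we have c(a)·c(b) > c(a+b). -/
open Filter Real Topology

/-!
Write `c n = f n * g n` with `g x = x ^ (-k) * exp (A * x ^ l)` and `f n → C > 0`. Then
`c a * c b / c (a + b)` is `f a * f b / f (a + b) → C` times `g a * g b / g (a + b)`, and the latter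
tends to infinity: with `m = min a b`, concavity of `x ↦ x ^ l` gives
`a ^ l + b ^ l - (a + b) ^ l ≥ (1 - l) * m ^ l`, so the exponential factor grows like
`exp (A * (1 - l) * m ^ l)`, which beats the polynomial loss `m ^ (-|k|)` because `l > 0`.
-/

theorem Real.add_rpow_le_mul_rpow_add_rpow {l x y : ℝ} (hl₀ : 0 ≤ l) (hl₁ : l ≤ 1)
    (hx : 0 < x) (hxy : x ≤ y) : (x + y) ^ l ≤ l * x ^ l + y ^ l := by
  have hy : 0 < y := hx.trans_le hxy
  have hbern : (1 + x / y) ^ l ≤ 1 + l * (x / y) :=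
    rpow_one_add_le_one_add_mul_self (by linarith [div_pos hx hy]) hl₀ hl₁
  have hdecr : y ^ (l - 1) ≤ x ^ (l - 1) := rpow_le_rpow_of_nonpos hx hxy (by linarith)
  calc (x + y) ^ l = y ^ l * (1 + x / y) ^ l := by
        rw [← mul_rpow hy.le (by positivity), mul_add, mul_div_cancel₀ _ hy.ne', mul_one,
          add_comm]
    _ ≤ y ^ l * (1 + l * (x / y)) := by gcongr
    _ = l * (x * y ^ (l - 1)) + y ^ l := by
        rw [rpow_sub hy, rpow_one]; field_simp; ring
    _ ≤ l * (x * x ^ (l - 1)) + y ^ l := by gcongr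
    _ = l * x ^ l + y ^ l := by rw [mul_comm x, ← rpow_add_one hx.ne', sub_add_cancel]

theorem Real.one_sub_mul_min_rpow_add_add_rpow_le {l x y : ℝ} (hl₀ : 0 ≤ l) (hl₁ : l ≤ 1)
    (hx : 0 < x) (hy : 0 < y) : (1 - l) * min x y ^ l + (x + y) ^ l ≤ x ^ l + y ^ l := by
  rcases le_total x y with h | h
  · rw [min_eq_left h]
    linarith [add_rpow_le_mul_rpow_add_rpow hl₀ hl₁ hx h]
  · rw [min_eq_right h, add_comm x y]
    linarith [add_rpow_le_mul_rpow_add_rpow hl₀ hl₁ hy h]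

theorem Real.rpow_neg_abs_le_rpow {a s : ℝ} (k : ℝ) (ha : 0 < a) (hs₁ : a⁻¹ ≤ s) (hs₂ : s ≤ a) :
    a ^ (-|k|) ≤ s ^ k := by
  have hs : 0 < s := (inv_pos.2 ha).trans_le hs₁
  rcases le_or_gt 0 k with hk | hk
  · rw [abs_of_nonneg hk, rpow_neg ha.le, ← inv_rpow ha.le]
    exact rpow_le_rpow (by positivity) hs₁ hk
  · rw [abs_of_neg hk, neg_neg]
    exact rpow_le_rpow_of_nonpos hs hs₂ hk.le

theorem tendsto_rpow_mul_exp_mul_rpow_atTop (s : ℝ) {B l : ℝ} (hB : 0 < B) (hl : 0 < l) :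
    Tendsto (fun x : ℝ => x ^ s * exp (B * x ^ l)) atTop atTop := by
  refine ((tendsto_exp_mul_div_rpow_atTop (-s / l) B hB).comp (tendsto_rpow_atTop hl)).congr' ?_
  filter_upwards [eventually_ge_atTop 0] with x hx
  rw [Function.comp_apply, ← rpow_mul hx, mul_div_cancel₀ _ hl.ne', rpow_neg hx, div_inv_eq_mul,
    mul_comm]

noncomputable def stretchedExp (A k l x : ℝ) : ℝ := x ^ (-k) * exp (A * x ^ l)

section stretchedExp

variable {A k l x y : ℝ}

theorem stretchedExp_pos (hx : 0 < x) : 0 < stretchedExp A k l x := by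
  unfold stretchedExp; positivity

theorem inv_stretchedExp (hx : 0 ≤ x) : (stretchedExp A k l x)⁻¹ = x ^ k * exp (-A * x ^ l) := by
  rw [stretchedExp, mul_inv, rpow_neg hx, inv_inv, neg_mul, exp_neg]

theorem stretchedExp_mul_div_stretchedExp_add (hx : 0 < x) (hy : 0 < y) :
    stretchedExp A k l x * stretchedExp A k l y / stretchedExp A k l (x + y) =
      (x * y / (x + y)) ^ (-k) * exp (A * (x ^ l + y ^ l - (x + y) ^ l)) := by
  simp only [stretchedExp, div_rpow (mul_pos hx hy).le (add_pos hx hy).le, mul_rpow hx.le hy.le,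
    mul_sub, mul_add, exp_sub, exp_add]
  field_simp

theorem rpow_neg_abs_mul_exp_le_stretchedExp_mul_div (hA : 0 ≤ A) (hl₀ : 0 ≤ l) (hl₁ : l ≤ 1)
    (hx : 2 ≤ x) (hy : 2 ≤ y) :
    min x y ^ (-|k|) * exp (A * (1 - l) * min x y ^ l) ≤
      stretchedExp A k l x * stretchedExp A k l y / stretchedExp A k l (x + y) := by
  set m := min x y
  have hm : 2 ≤ m := le_min hx hy
  have hxy : 0 < x + y := by linarith
  rw [stretchedExp_mul_div_stretchedExp_add (by linarith) (by linarith)]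
  gcongr ?_ * exp ?_
  · -- `x * y / (x + y)` lies between `m / 2 ≥ m⁻¹` and `m`.
    refine abs_neg k ▸ rpow_neg_abs_le_rpow (-k) (by linarith) ?_ ?_
    · rw [le_div_iff₀ hxy, inv_mul_le_iff₀ (by linarith)]
      nlinarith [mul_le_mul_of_nonneg_right hm (by positivity : 0 ≤ x * y)]
    · rw [div_le_iff₀ hxy]
      rcases le_total x y with h | h
      · simp only [m, min_eq_left h]; nlinarith
      · simp only [m, min_eq_right h]; nlinarith
  · nlinarith [one_sub_mul_min_rpow_add_add_rpow_le hl₀ hl₁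
      (by linarith : (0 : ℝ) < x) (by linarith : (0 : ℝ) < y)]

theorem tendsto_stretchedExp_mul_div_stretchedExp_add (hA : 0 < A) (hl₀ : 0 < l) (hl₁ : l < 1) :
    Tendsto (fun p : ℝ × ℝ =>
      stretchedExp A k l p.1 * stretchedExp A k l p.2 / stretchedExp A k l (p.1 + p.2))
      atTop atTop := by
  have hmin : Tendsto (fun p : ℝ × ℝ => min p.1 p.2) atTop atTop := by
    rw [← prod_atTop_atTop_eq]
    exact tendsto_inf_atTop _ tendsto_fst tendsto_snd
  refine tendsto_atTop_mono' _ ?_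
    ((tendsto_rpow_mul_exp_mul_rpow_atTop (-|k|) (mul_pos hA (sub_pos.2 hl₁)) hl₀).comp hmin)
  filter_upwards [eventually_ge_atTop (2, 2)] with p hp
  exact rpow_neg_abs_mul_exp_le_stretchedExp_mul_div hA.le hl₀.le hl₁.le hp.1 hp.2

end stretchedExp

theorem eventually_lt_mul_of_tendsto_div {c g : ℕ → ℝ} {C : ℝ} (hC : 0 < C)
    (hg : ∀ᶠ n in atTop, 0 < g n) (hc : Tendsto (fun n => c n / g n) atTop (𝓝 C))
    (hratio : Tendsto (fun p : ℕ × ℕ => g p.1 * g p.2 / g (p.1 + p.2)) atTop atTop) :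
    ∀ᶠ p : ℕ × ℕ in atTop, c (p.1 + p.2) < c p.1 * c p.2 := by
  set f := fun n => c n / g n
  have hfst : Tendsto (fun p : ℕ × ℕ => p.1) atTop atTop := by
    rw [← prod_atTop_atTop_eq]; exact tendsto_fst
  have hsnd : Tendsto (fun p : ℕ × ℕ => p.2) atTop atTop := by
    rw [← prod_atTop_atTop_eq]; exact tendsto_snd
  have hsum : Tendsto (fun p : ℕ × ℕ => p.1 + p.2) atTop atTop :=
    tendsto_atTop_mono (fun p => Nat.le_add_right p.1 p.2) hfst
  have hf : Tendsto (fun p : ℕ × ℕ => f p.1 * f p.2 / f (p.1 + p.2)) atTop (𝓝 C) := by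
    have := ((hc.comp hfst).mul (hc.comp hsnd)).div (hc.comp hsum) hC.ne'
    rwa [mul_div_cancel_right₀ _ hC.ne'] at this
  filter_upwards [(hf.pos_mul_atTop hC hratio).eventually_gt_atTop 1, hfst.eventually hg,
    hsnd.eventually hg, hsum.eventually hg, hsum.eventually (hc.eventually_const_lt hC)]
    with p hq hga hgb hgs hfs
  have hcs : 0 < c (p.1 + p.2) := by simpa [f, div_pos_iff_of_pos_right hgs] using hfs
  calc c (p.1 + p.2) < (f p.1 * f p.2 / f (p.1 + p.2) * (g p.1 * g p.2 / g (p.1 + p.2))) *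
        c (p.1 + p.2) := lt_mul_left hcs hq
    _ = c p.1 * c p.2 := by simp only [f]; field_simp

theorem stmt_11 (c : ℕ → ℝ) (C A k l : ℝ) (hC : 0 < C) (hA : 0 < A)
    (hl0 : 0 < l) (hl1 : l < 1)
    (hc : Tendsto (fun n : ℕ => c n * (n : ℝ) ^ k * Real.exp (-A * (n : ℝ) ^ l))
      atTop (nhds C)) :
    ∃ N : ℕ, ∀ a b : ℕ, N ≤ a → N ≤ b → c a * c b > c (a + b) := by
  have hcast : Tendsto (fun p : ℕ × ℕ => ((p.1 : ℝ), (p.2 : ℝ))) atTop atTop := by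
    rw [← prod_atTop_atTop_eq, ← prod_atTop_atTop_eq]
    exact tendsto_natCast_atTop_atTop.prodMap tendsto_natCast_atTop_atTop
  have hratio := (tendsto_stretchedExp_mul_div_stretchedExp_add (k := k) hA hl0 hl1).comp hcast
  have hpos : ∀ᶠ n : ℕ in atTop, 0 < stretchedExp A k l n :=
    (eventually_gt_atTop 0).mono fun n hn => stretchedExp_pos (Nat.cast_pos.2 hn)
  have hc' : Tendsto (fun n : ℕ => c n / stretchedExp A k l n) atTop (𝓝 C) := by
    simpa only [div_eq_mul_inv, inv_stretchedExp (Nat.cast_nonneg _), mul_assoc] using hc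
  obtain ⟨N, hN⟩ := eventually_atTop_prod_self'.1
    (eventually_lt_mul_of_tendsto_div hC hpos hc' (by simpa [Function.comp_def] using hratio))
  exact ⟨N, fun a b ha hb => hN a ha b hb⟩
end

section
/- For all n ≥ 1, the order n! of S_n divides the number of ℓ-tuples (π₁,…,π_ℓ) ∈ S_nˡ whose components pairwise commute, for every ℓ ≥ 1. -/
/-!
Conjugation acts on commuting `m`-tuples, and an `(m + 1)`-tuple of commuting elements is the
same as a pair `(g, f)` with `f` a commuting `m`-tuple fixed by conjugation by `g`. Burnside's
lemma counts such pairs as `|G|` times the number of conjugation orbits of commuting `m`-tuples.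
-/

open MulAction

theorem Fin.forall_commute_cons_iff {M : Type*} [Mul M] {m : ℕ} {a : M} {f : Fin m → M} :
    (∀ j k, Commute ((Fin.cons a f : Fin (m + 1) → M) j) ((Fin.cons a f : Fin (m + 1) → M) k)) ↔
      (∀ i, Commute a (f i)) ∧ ∀ j k, Commute (f j) (f k) := by
  simp only [Fin.forall_fin_succ, Fin.cons_zero, Fin.cons_succ, Commute.refl, true_and]
  exact ⟨fun ⟨ha, hf⟩ => ⟨ha, fun j => (hf j).2⟩,
    fun ⟨ha, hf⟩ => ⟨ha, fun j => ⟨(ha j).symm, hf j⟩⟩⟩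

namespace ConjAct

variable {G : Type*} [Group G]

theorem smul_eq_self_iff_commute (g : ConjAct G) (h : G) :
    g • h = h ↔ Commute (ofConjAct g) h := by
  rw [smul_def, mul_inv_eq_iff_eq_mul]
  rfl

variable (G) in
def commutingTuples (m : ℕ) : SubMulAction (ConjAct G) (Fin m → G) where
  carrier := {f | ∀ j k, Commute (f j) (f k)}
  smul_mem' g f hf j k := by
    simpa only [Pi.smul_apply, smul_eq_mulAut_conj] using (hf j k).map (MulAut.conj (ofConjAct g))

theorem mem_fixedBy_commutingTuples_iff {m : ℕ} (g : ConjAct G) (f : commutingTuples G m) :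
    f ∈ fixedBy (commutingTuples G m) g ↔ ∀ i, Commute (ofConjAct g) (f.1 i) := by
  simp only [mem_fixedBy, Subtype.ext_iff, funext_iff, SubMulAction.val_smul, Pi.smul_apply,
    smul_eq_self_iff_commute]

def commutingTuplesSuccEquiv (m : ℕ) :
    commutingTuples G (m + 1) ≃ {p : ConjAct G × commutingTuples G m // p.1 • p.2 = p.2} where
  toFun f :=
    have h := Fin.forall_commute_cons_iff.1 (Fin.cons_self_tail f.1 ▸ f.2)
    ⟨(toConjAct (f.1 0), ⟨Fin.tail f.1, h.2⟩), (mem_fixedBy_commutingTuples_iff _ _).2 h.1⟩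
  invFun p := ⟨Fin.cons (ofConjAct p.1.1) p.1.2.1,
    Fin.forall_commute_cons_iff.2 ⟨(mem_fixedBy_commutingTuples_iff _ _).1 p.2, p.1.2.2⟩⟩
  left_inv f := Subtype.ext (Fin.cons_self_tail f.1)
  right_inv _ := rfl

theorem card_commutingTuples_succ (m : ℕ) :
    Nat.card (commutingTuples G (m + 1)) =
      Nat.card (orbitRel.Quotient (ConjAct G) (commutingTuples G m)) * Nat.card G := by
  rw [Nat.card_congr ((commutingTuplesSuccEquiv m).trans
      ((Equiv.subtypeProdEquivSigmaSubtype _).trans (sigmaFixedByEquivOrbitsProdGroup _ _))),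
    Nat.card_prod]
  rfl

theorem card_dvd_card_commutingTuples {l : ℕ} (hl : 1 ≤ l) :
    Nat.card G ∣ Nat.card (commutingTuples G l) := by
  obtain ⟨m, rfl⟩ := Nat.exists_eq_add_of_le' hl
  rw [card_commutingTuples_succ]
  exact dvd_mul_left _ _

end ConjAct

theorem stmt_16_general (n l : ℕ) (hl : 1 ≤ l) :
    n.factorial ∣
      Nat.card {f : Fin l → Equiv.Perm (Fin n) // ∀ j k, f j * f k = f k * f j} := by
  have h := ConjAct.card_dvd_card_commutingTuples (G := Equiv.Perm (Fin n)) hl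
  rwa [Nat.card_perm, Nat.card_fin] at h

theorem stmt_16 (n l : ℕ) (hn : 1 ≤ n) (hl : 1 ≤ l) :
    n.factorial ∣
      Nat.card {f : Fin l → Equiv.Perm (Fin n) // ∀ j k, f j * f k = f k * f j} :=
  stmt_16_general n l hl
end

section
/- For real μ > 0 and ν > 0, as n → ∞ one has 2·n^{−(μ+ν)} − (n+1)^{−μ}(n−1)^{−ν} − (n+1)^{−ν}(n−1)^{−μ} = O(n^{−(μ+ν)−2}). -/
/-!
Writing `g x = (1 + x) ^ (-m) * (1 - x) ^ (-v)`, the expression equals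
`-n ^ (-(m + v)) * (g (1/n) + g (-1/n) - 2 g 0)`. The function `g` is smooth near `0`, and
the symmetric second difference `g x + g (-x) - 2 g 0` of a `C²` function is `O(x²)` because
the first-order terms cancel.
-/

open Filter Asymptotics Topology

section SecondOrder

variable {E : Type*} [NormedAddCommGroup E] [NormedSpace ℝ E] {f : ℝ → E} {a : ℝ}

theorem ContDiffAt.isBigO_sub_sub_smul_deriv (hf : ContDiffAt ℝ 2 f a) :
    (fun x => f x - f a - (x - a) • deriv f a) =O[𝓝 a] fun x => (x - a) ^ 2 := by
  obtain ⟨ε, hε, hball⟩ := Metric.eventually_nhds_iff_ball.mp (hf.eventually (by simp))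
  have hnhds : 𝓝[Metric.ball a ε] a = 𝓝 a := nhdsWithin_eq_nhds.mpr (Metric.ball_mem_nhds a hε)
  have hderiv : HasDerivAt (deriv f) (deriv (deriv f) a) a :=
    ((hf.derivWithin (m := 1) (by norm_num)).differentiableAt (by norm_num)).hasDerivAt
  -- Removing the second-order Taylor term leaves a remainder whose derivative is `o(x - a)`.
  set c : E := (2 : ℝ)⁻¹ • deriv (deriv f) a
  set r : ℝ → E := fun x => f x - f a - (x - a) • deriv f a - (x - a) ^ 2 • c
  have hr : ∀ x ∈ Metric.ball a ε, HasDerivWithinAt r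
      (deriv f x - deriv f a - (x - a) • deriv (deriv f) a) (Metric.ball a ε) x := by
    intro x hx
    have hfx := ((hball x hx).differentiableAt (by norm_num)).hasDerivAt
    have hlin : HasDerivAt (fun y : ℝ => y - a) 1 x := (hasDerivAt_id x).sub_const a
    refine (((hfx.sub_const (f a)).sub (hlin.smul_const (deriv f a))).sub
      ((hlin.pow 2).smul_const c)).hasDerivWithinAt.congr_deriv ?_
    simp only [c, smul_smul, one_smul]
    congr 2
    ring
  have hr' : (fun x => deriv f x - deriv f a - (x - a) • deriv (deriv f) a)
      =o[𝓝[Metric.ball a ε] a] fun x => (x - a) ^ 1 := by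
    rw [hnhds]
    simpa using hasDerivAt_iff_isLittleO.mp hderiv
  have hrem := (convex_ball a ε).isLittleO_pow_succ_real (Metric.mem_ball_self hε) hr hr'
  rw [hnhds] at hrem
  have hquad : (fun x => (x - a) ^ 2 • c) =O[𝓝 a] fun x => (x - a) ^ 2 := by
    refine isBigO_iff.mpr ⟨‖c‖, .of_forall fun x => ?_⟩
    rw [norm_smul, mul_comm]
  refine (hrem.isBigO.add hquad).congr_left fun x => ?_
  simp [r]

theorem ContDiffAt.isBigO_add_comp_neg_sub_two_nsmul (hf : ContDiffAt ℝ 2 f 0) :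
    (fun x => f x + f (-x) - 2 • f 0) =O[𝓝 0] fun x => x ^ 2 := by
  have h : (fun x => f x - f 0 - x • deriv f 0) =O[𝓝 0] fun x => x ^ 2 := by
    simpa using hf.isBigO_sub_sub_smul_deriv
  have hneg := h.comp_tendsto (neg_zero (G := ℝ) ▸ tendsto_neg (0 : ℝ))
  refine (h.add (hneg.congr_right fun x => by simp)).congr_left fun x => ?_
  simp only [Function.comp_apply, neg_smul]
  rw [two_nsmul]
  abel

end SecondOrder

theorem add_one_rpow_mul_sub_one_rpow {n : ℝ} (hn : 1 ≤ n) (p q : ℝ) :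
    (n + 1) ^ p * (n - 1) ^ q = n ^ (p + q) * ((1 + n⁻¹) ^ p * (1 - n⁻¹) ^ q) := by
  have hn0 : 0 < n := by linarith
  have hsub : 0 ≤ 1 - n⁻¹ := sub_nonneg.mpr (inv_le_one_of_one_le₀ hn)
  rw [show n + 1 = n * (1 + n⁻¹) by field_simp, show n - 1 = n * (1 - n⁻¹) by field_simp,
    Real.mul_rpow hn0.le (by positivity), Real.mul_rpow hn0.le hsub, Real.rpow_add hn0]
  ring

theorem stmt_18_general (m v : ℝ) :
    (fun n : ℝ => 2 * n ^ (-(m + v)) - (n + 1) ^ (-m) * (n - 1) ^ (-v)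
        - (n + 1) ^ (-v) * (n - 1) ^ (-m))
      =O[atTop] fun n : ℝ => n ^ (-(m + v) - 2) := by
  set g : ℝ → ℝ := fun x => (1 + x) ^ (-m) * (1 - x) ^ (-v)
  have hg : ContDiffAt ℝ 2 g 0 := by fun_prop (disch := norm_num)
  have hsym := hg.isBigO_add_comp_neg_sub_two_nsmul.comp_tendsto tendsto_inv_atTop_zero
  refine ((isBigO_refl (fun n : ℝ => n ^ (-(m + v))) atTop).mul hsym).neg_left.congr' ?_ ?_
    <;> filter_upwards [eventually_ge_atTop 1] with n hn
  · simp only [Function.comp_apply, g, add_one_rpow_mul_sub_one_rpow hn]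
    rw [← neg_add, ← neg_add, add_comm v m, ← sub_eq_add_neg, sub_neg_eq_add]
    simp only [add_zero, sub_zero, Real.one_rpow, mul_one, nsmul_eq_mul]
    ring
  · rw [Function.comp_apply, Real.rpow_sub (by linarith), Real.rpow_two, div_eq_mul_inv, inv_pow]

theorem stmt_18 (m v : ℝ) (hm : 0 < m) (hv : 0 < v) :
    (fun n : ℝ => 2 * n ^ (-(m + v)) - (n + 1) ^ (-m) * (n - 1) ^ (-v)
        - (n + 1) ^ (-v) * (n - 1) ^ (-m))
      =O[atTop] fun n : ℝ => n ^ (-(m + v) - 2) :=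
  stmt_18_general m v
end
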